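/- arXiv:2603.16005 — 6 statements merged into one kernel-verified Lean document; each statement's English description precedes it below -/
import Mathlib

section
/- Assume the cost c(x,y) = h(x−y) satisfies (H1)–(H3). Consider the setup: distinct points u_1,…,u_n ∈ ℝ^d, distinct points x_1,…,x_n ∈ ℝ^d, an optimal assignment σ_n for (u,x) with T(u_i) = x_{σ_n(i)}; fix j ∈ {1,…,n} and v ∈ S^{d−1}, relabel u_1,…,u_n as u_(1),…,u_(n) so that for some ℓ, u_(ℓ) = u_j and {u_(1),…,u_(ℓ)} consists exactly of the sample points in the halfspace {x : ⟨v, x − u_j⟩ ≤ 0}; fix z_0 ∈ ℝ^d, m ∈ {1,…,n}, and for k ∈ ℕ set z_k = u_j − ∇h*(z_0 + k v); let T_k be an optimal assignment of the n source points u_(1),…,u_(n) to the n target points consisting of z_k with multiplicity m together with T(u_(i)) for i = m+1,…,n. If m ≥ ℓ, then ‖T_k(u_j)‖ → ∞ as k → ∞, for any choice of the optimal assignments T_k. -/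
open Filter MeasureTheory Bornology Topology Set
open scoped RealInnerProductSpace ENNReal BigOperators Classical

noncomputable section

abbrev Euc (d : ℕ) := EuclideanSpace ℝ (Fin d)

/-- The cost function `c(x,y) = h(x-y)`. -/
def cost {d : ℕ} (h : Euc d → ℝ) (x y : Euc d) : ℝ := h (x - y)

/-- The truncated cone `Cone(r, θ, z, p)`. -/
def TruncCone {d : ℕ} (r θ : ℝ) (z p : Euc d) : Set (Euc d) :=
  {x | ‖x - p‖ * ‖z‖ * Real.cos (θ / 2) ≤ ⟪z, x - p⟫ ∧ ⟪z, x - p⟫ ≤ r * ‖z‖}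

/-- (H1): `h` is strictly convex. -/
def H1 {d : ℕ} (h : Euc d → ℝ) : Prop := StrictConvexOn ℝ Set.univ h

/-- (H2): for every height `r > 0` and angle `θ ∈ (0, π)` there is `M > 0` such that for every
`p` with `‖p‖ > M` there is a truncated cone with vertex `p` on which `h` attains its maximum
at `p`. -/
def H2 {d : ℕ} (h : Euc d → ℝ) : Prop :=
  ∀ r : ℝ, 0 < r → ∀ θ : ℝ, θ ∈ Set.Ioo 0 Real.pi → ∃ M : ℝ, 0 < M ∧
    ∀ p : Euc d, M < ‖p‖ → ∃ z : Euc d, z ≠ 0 ∧ ∀ x ∈ TruncCone r θ z p, h x ≤ h p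

/-- (H3): `h(x)/‖x‖ → ∞` as `‖x‖ → ∞`. -/
def H3 {d : ℕ} (h : Euc d → ℝ) : Prop :=
  ∀ C : ℝ, ∃ R : ℝ, ∀ x : Euc d, R ≤ ‖x‖ → C * ‖x‖ ≤ h x

/-- A function `f : ℝ^d → ℝ ∪ {-∞}` is `c`-concave if it is an infimum of functions
`x ↦ c(x,y) - t` over a nonempty family `𝒯` of pairs `(y,t)`. -/
def IsCConcave {d : ℕ} (h : Euc d → ℝ) (f : Euc d → EReal) : Prop :=
  ∃ T : Set (Euc d × ℝ), T.Nonempty ∧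
    ∀ x : Euc d, f x = ⨅ p ∈ T, ((cost h x p.1 - p.2 : ℝ) : EReal)

/-- The `c`-superdifferential of `f`, as a subset of `ℝ^d × ℝ^d`. -/
def CSuperdiff {d : ℕ} (h : Euc d → ℝ) (f : Euc d → EReal) : Set (Euc d × Euc d) :=
  {q | ∀ z : Euc d, f z ≤ f q.1 + ((cost h z q.2 - cost h q.1 q.2 : ℝ) : EReal)}

/-- `∂^c f(x)`. -/
def CSuperdiffAt {d : ℕ} (h : Euc d → ℝ) (f : Euc d → EReal) (x : Euc d) : Set (Euc d) :=
  {y | (x, y) ∈ CSuperdiff h f}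

/-- `∂^c f(U) = ⋃_{x ∈ U} ∂^c f(x)`. -/
def CSuperdiffImg {d : ℕ} (h : Euc d → ℝ) (f : Euc d → EReal) (U : Set (Euc d)) :
    Set (Euc d) :=
  ⋃ x ∈ U, CSuperdiffAt h f x

/-- `dom(f) = {x : f(x) > -∞}`. -/
def edom {d : ℕ} (f : Euc d → EReal) : Set (Euc d) := {x | f x ≠ ⊥}

/-- A sequence of sets escapes to the horizon if it eventually avoids every ball
`B_R(0)`. -/
def EscapesToHorizon {α : Type*} [Norm α] (A : ℕ → Set α) : Prop :=
  ∀ R : ℝ, 0 < R → ∃ N : ℕ, ∀ n, N ≤ n → ∀ a ∈ A n, R ≤ ‖a‖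

/-- No subsequence of the sequence of sets escapes to the horizon. -/
def NoSubseqEscapes {α : Type*} [Norm α] (A : ℕ → Set α) : Prop :=
  ∀ φ : ℕ → ℕ, StrictMono φ → ¬ EscapesToHorizon fun k => A (φ k)

/-- A Kantorovich potential for `(Q, P')`: a `c`-concave function `f` whose `c`-superdifferential
is `Q`-a.e. a singleton `{T x}` and whose (a.e. defined) selection `T` pushes `Q` forward
to `P'`. -/
def IsKantorovichPotential {d : ℕ} (h : Euc d → ℝ) (Q P' : Measure (Euc d))
    (f : Euc d → EReal) : Prop :=
  IsCConcave h f ∧ ∃ T : Euc d → Euc d,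
    (∀ᵐ x ∂Q, CSuperdiffAt h f x = {T x}) ∧ Measure.map T Q = P'

/-- The Tukey depth `TD(u;Q) = inf_{v ∈ S^{d-1}} Q {x : ⟨v, x-u⟩ ≤ 0}`. -/
def tukeyDepth {d : ℕ} (Q : Measure (Euc d)) (u : Euc d) : ℝ≥0∞ :=
  ⨅ v ∈ {v : Euc d | ‖v‖ = 1}, Q {x | ⟪v, x - u⟫ ≤ 0}

/-- The set `S_ε(u)` of possible values at `u` of `c`-superdifferentials of Kantorovich
potentials from `Q` to an `ε`-contamination of `P`. -/
def contamSet {d : ℕ} (h : Euc d → ℝ) (Q P : Measure (Euc d)) (ε : ℝ) (u : Euc d) :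
    Set (Euc d) :=
  {y | ∃ μ : Measure (Euc d), IsProbabilityMeasure μ ∧ ∃ f : Euc d → EReal,
    IsKantorovichPotential h Q (ENNReal.ofReal (1 - ε) • P + ENNReal.ofReal ε • μ) f ∧
    y ∈ CSuperdiffAt h f u}

/-- Breakdown point `BP(u) = inf {ε ∈ (0,1) : S_ε(u) is unbounded}`. -/
def breakdownPoint {d : ℕ} (h : Euc d → ℝ) (Q P : Measure (Euc d)) (u : Euc d) : ℝ≥0∞ :=
  ⨅ ε ∈ {ε : ℝ | 0 < ε ∧ ε < 1 ∧ ¬ IsBounded (contamSet h Q P ε u)}, ENNReal.ofReal ε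

/-- `σ` is an optimal assignment for source points `u` and target points `x`. -/
def IsOptAssign {d n : ℕ} (h : Euc d → ℝ) (u x : Fin n → Euc d)
    (σ : Equiv.Perm (Fin n)) : Prop :=
  ∀ τ : Equiv.Perm (Fin n), ∑ i, cost h (u i) (x (σ i)) ≤ ∑ i, cost h (u i) (x (τ i))

/-- The dataset `x'` shares at least `k` atoms (with multiplicity) with the dataset `x`
of distinct points. -/
def SharesAtoms {d n : ℕ} (x x' : Fin n → Euc d) (k : ℕ) : Prop :=
  ∃ s : Finset (Fin n), k ≤ s.card ∧ ∃ g : Fin n → Fin n,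
    Set.InjOn g ↑s ∧ ∀ i ∈ s, x' (g i) = x i

/-- The set of values `x'_{σ(j)}` over datasets `x'` sharing at least `n - ℓ` atoms with `x`
and optimal assignments `σ` for `(u, x')`. -/
def fsBadSet {d n : ℕ} (h : Euc d → ℝ) (u x : Fin n → Euc d) (j : Fin n) (ℓ : ℕ) :
    Set (Euc d) :=
  {y | ∃ (x' : Fin n → Euc d) (σ : Equiv.Perm (Fin n)),
    SharesAtoms x x' (n - ℓ) ∧ IsOptAssign h u x' σ ∧ y = x' (σ j)}

/-- Finite sample (replacement) breakdown point of `T_{Q_n → P_n}(u_j)`. -/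
def finiteSampleBP {d n : ℕ} (h : Euc d → ℝ) (u x : Fin n → Euc d) (j : Fin n) : ℝ :=
  ((sInf {ℓ : ℕ | 1 ≤ ℓ ∧ ℓ ≤ n ∧ ¬ IsBounded (fsBadSet h u x j ℓ)} : ℕ) : ℝ) / n

/-- Tukey depth of `a` with respect to the empirical measure of `u_1, …, u_n`. -/
def empTD {d n : ℕ} (u : Fin n → Euc d) (a : Euc d) : ℝ :=
  ⨅ v : {v : Euc d // ‖v‖ = 1},
    ((Finset.univ.filter fun i => ⟪(v : Euc d), u i - a⟫ ≤ 0).card : ℝ) / n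

/-- Lower Tukey depth of `a` with respect to the empirical measure of `u_1, …, u_n`. -/
def empTDlt {d n : ℕ} (u : Fin n → Euc d) (a : Euc d) : ℝ :=
  ⨅ v : {v : Euc d // ‖v‖ = 1},
    ((Finset.univ.filter fun i => ⟪(v : Euc d), u i - a⟫ < 0).card : ℝ) / n

/-- Points in general position: every subset of cardinality at most `d+1` is affinely
independent. -/
def InGeneralPosition {d n : ℕ} (u : Fin n → Euc d) : Prop :=
  ∀ s : Finset (Fin n), s.card ≤ d + 1 → AffineIndependent ℝ fun i : s => u (i : Fin n)

/-- Convex conjugate `h*(y) = sup_x (⟨x,y⟩ - h(x))`. -/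
def convConj {d : ℕ} (h : Euc d → ℝ) (y : Euc d) : ℝ := ⨆ x : Euc d, (⟪x, y⟫ - h x)

/-- Topological support of a measure. -/
def measSupport {d : ℕ} (Q : Measure (Euc d)) : Set (Euc d) :=
  {x | ∀ U : Set (Euc d), IsOpen U → x ∈ U → 0 < Q U}

/-- A set `Γ ⊂ ℝ^d × ℝ^d` is `c`-cyclically monotone. -/
def CCyclMono {d : ℕ} (h : Euc d → ℝ) (Γ : Set (Euc d × Euc d)) : Prop :=
  ∀ (N : ℕ) (p : Fin N → Euc d × Euc d), (∀ i, p i ∈ Γ) →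
    ∀ τ : Equiv.Perm (Fin N),
      ∑ i, cost h (p i).1 (p i).2 ≤ ∑ i, cost h (p i).1 (p (τ i)).2

/-! Since `∇h*(p)` minimises `h - ⟪·, p⟫`, the contaminating point satisfies
`u_j - z_k = ∇h*(p_k)` with `p_k = z₀ + k v`, hence
`h (u_(a) - z_k) ≥ h (u_j - z_k) + ⟪u_(a) - u_j, p_k⟫`. For a source `u_(a)` strictly on the
positive side of the hyperplane through `u_j` orthogonal to `v`, the last term grows linearly in `k`,
so for large `k` an optimal assignment cannot send `u_(a)` to `z_k` while sending `u_j` elsewhere: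
swapping the two targets would be cheaper. The `m ≥ ℓ` copies of `z_k` cannot all go to the
`ℓ - 1` other sources of the closed halfspace, so eventually `T_k(u_j) = z_k`; and `‖z_k‖ → ∞`
because `⟪v, p_k⟫ → ∞` forces `‖∇h*(p_k)‖ → ∞`. -/

section Subgradient

variable {E : Type*} [NormedAddCommGroup E] [InnerProductSpace ℝ E] {h : E → ℝ} {p x : E}

lemma IsMinOn.add_inner_le (hx : IsMinOn (fun w => h w - ⟪w, p⟫) univ x) (w : E) :
    h x + ⟪w, p⟫ ≤ h (x + w) := by
  have := isMinOn_univ_iff.1 hx (x + w)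
  simp only [inner_add_left] at this
  linarith

lemma StrictConvexOn.eq_of_isMinOn_sub_inner (h1 : StrictConvexOn ℝ univ h) {y : E}
    (hx : IsMinOn (fun w => h w - ⟪w, p⟫) univ x) (hy : IsMinOn (fun w => h w - ⟪w, p⟫) univ y) :
    x = y := by
  have hobj : (h - ⇑(innerₛₗ ℝ p)) = fun w => h w - ⟪w, p⟫ :=
    funext fun w => by simp [real_inner_comm]
  have hconv := h1.sub_concaveOn ((innerₛₗ ℝ p).concaveOn convex_univ)
  rw [hobj] at hconv
  exact hconv.eq_of_isMinOn hx hy (mem_univ x) (mem_univ y)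

lemma isMinOn_sub_inner_of_mapClusterPt (hc : Continuous h) {Φ : E → E}
    (hΦ : ∀ q, IsMinOn (fun w => h w - ⟪w, q⟫) univ (Φ q)) {L : E}
    (hL : MapClusterPt L (𝓝 p) Φ) : IsMinOn (fun w => h w - ⟪w, p⟫) univ L := by
  have hgraph : MapClusterPt (p, L) (𝓝 p) fun q => (q, Φ q) := by
    rw [((𝓝 p).basis_sets.prod_nhds (𝓝 L).basis_sets).mapClusterPt_iff_frequently]
    rintro ⟨s, t⟩ ⟨hs, ht⟩
    exact ((mapClusterPt_iff_frequently.1 hL t ht).and_eventually hs).mono fun q hq => ⟨hq.2, hq.1⟩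
  intro w _
  have hclosed : IsClosed {r : E × E | h r.2 - ⟪r.2, r.1⟫ ≤ h w - ⟪w, r.1⟫} :=
    isClosed_le (by fun_prop) (by fun_prop)
  exact hclosed.mem_of_mapClusterPt hgraph (.of_forall fun q => hΦ q (mem_univ w))

lemma tendsto_norm_atTop_of_isMinOn_sub_inner [ProperSpace E] (hc : Continuous h) {ι : Type*}
    {l : Filter ι} {p Φ : ι → E} (hΦ : ∀ k, IsMinOn (fun w => h w - ⟪w, p k⟫) univ (Φ k))
    {v : E} (hp : Tendsto (fun k => ⟪v, p k⟫) l atTop) : Tendsto (fun k => ‖Φ k‖) l atTop := by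
  refine tendsto_atTop.2 fun b => ?_
  obtain ⟨B, hB⟩ := (isCompact_closedBall (0 : E) b).exists_bound_of_continuousOn
    (f := fun y => h (y + v) - h y) (by fun_prop)
  filter_upwards [hp.eventually_gt_atTop B] with k hk
  -- `⟪v, p k⟫ ≤ h (Φ k + v) - h (Φ k)`, which stays below `B` while `‖Φ k‖ < b`.
  by_contra! hlt
  have hB' := (le_abs_self _).trans (hB (Φ k) (mem_closedBall_zero_iff.2 hlt.le))
  linarith [(hΦ k).add_inner_le v]

lemma tendsto_inner_add_natCast_smul_atTop {w v : E} (z₀ : E) (hwv : 0 < ⟪w, v⟫) :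
    Tendsto (fun k : ℕ => ⟪w, z₀ + (k : ℝ) • v⟫) atTop atTop := by
  simp only [inner_add_right, real_inner_smul_right]
  exact tendsto_atTop_add_const_left _ _ (tendsto_natCast_atTop_atTop.atTop_mul_const hwv)

end Subgradient

section Conjugate

variable {d : ℕ} {h : Euc d → ℝ}

lemma H1.continuous (h1 : H1 h) : Continuous h :=
  continuousOn_univ.1 ((StrictConvexOn.convexOn h1).continuousOn isOpen_univ)

lemma H3.norm_le_sub_inner (h3 : H3 h) (b : ℝ) :
    ∃ R, ∀ q w : Euc d, ‖q‖ ≤ b → R ≤ ‖w‖ → ‖w‖ ≤ h w - ⟪w, q⟫ := by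
  obtain ⟨R, hR⟩ := h3 (b + 1)
  refine ⟨R, fun q w hq hw => ?_⟩
  nlinarith [hR w hw, real_inner_le_norm w q, norm_nonneg w]

lemma H3.exists_isMinOn_sub_inner (h3 : H3 h) (hc : Continuous h) (p : Euc d) :
    ∃ x, IsMinOn (fun w => h w - ⟪w, p⟫) univ x := by
  obtain ⟨R, hR⟩ := h3.norm_le_sub_inner ‖p‖
  have hcoercive : Tendsto (fun w => h w - ⟪w, p⟫) (cocompact _) atTop :=
    tendsto_atTop_mono' _ ((tendsto_norm_cocompact_atTop.eventually_ge_atTop R).mono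
      fun w hw => hR p w le_rfl hw) tendsto_norm_cocompact_atTop
  obtain ⟨x, hx⟩ := (hc.sub (continuous_id.inner continuous_const)).exists_forall_le hcoercive
  exact ⟨x, isMinOn_univ_iff.2 hx⟩

lemma H3.exists_norm_le_of_isMinOn (h3 : H3 h) (b : ℝ) :
    ∃ R, ∀ q x : Euc d, ‖q‖ ≤ b → IsMinOn (fun w => h w - ⟪w, q⟫) univ x → ‖x‖ ≤ R := by
  obtain ⟨R, hR⟩ := h3.norm_le_sub_inner b
  refine ⟨max R (h 0), fun q x hq hx => ?_⟩
  by_contra! hlt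
  have hfar := hR q x hq ((le_max_left _ _).trans hlt.le)
  have hmin := isMinOn_univ_iff.1 hx 0
  simp only [inner_zero_left, sub_zero] at hmin
  linarith [le_max_right R (h 0)]

lemma continuous_of_isMinOn_sub_inner (h1 : H1 h) (h3 : H3 h) {Φ : Euc d → Euc d}
    (hΦ : ∀ q, IsMinOn (fun w => h w - ⟪w, q⟫) univ (Φ q)) : Continuous Φ := by
  refine continuous_iff_continuousAt.2 fun p => ?_
  obtain ⟨R, hR⟩ := h3.exists_norm_le_of_isMinOn (‖p‖ + 1)
  refine (isCompact_closedBall (0 : Euc d) R).tendsto_nhds_of_unique_mapClusterPt ?_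
    fun L _ hL => ?_
  · filter_upwards [Metric.closedBall_mem_nhds p one_pos] with q hq
    refine mem_closedBall_zero_iff.2 (hR q _ ?_ (hΦ q))
    linarith [norm_le_norm_add_norm_sub' q p, mem_closedBall_iff_norm.1 hq]
  · exact StrictConvexOn.eq_of_isMinOn_sub_inner h1
      (isMinOn_sub_inner_of_mapClusterPt h1.continuous hΦ hL) (hΦ p)

lemma convConj_eq_of_isMinOn {p x : Euc d} (hx : IsMinOn (fun w => h w - ⟪w, p⟫) univ x) :
    convConj h p = ⟪x, p⟫ - h x := by
  have hle : ∀ w, ⟪w, p⟫ - h w ≤ ⟪x, p⟫ - h x := fun w => by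
    linarith [isMinOn_univ_iff.1 hx w]
  exact le_antisymm (ciSup_le hle) (le_ciSup ⟨_, forall_mem_range.2 hle⟩ x)

lemma hasGradientAt_convConj {Φ : Euc d → Euc d}
    (hΦ : ∀ q, IsMinOn (fun w => h w - ⟪w, q⟫) univ (Φ q)) {p : Euc d}
    (hcont : ContinuousAt Φ p) : HasGradientAt (convConj h) (Φ p) p := by
  rw [hasGradientAt_iff_isLittleO, Asymptotics.isLittleO_iff]
  intro c hc
  filter_upwards [hcont.eventually (Metric.closedBall_mem_nhds _ hc)] with q hq
  rw [convConj_eq_of_isMinOn (hΦ q), convConj_eq_of_isMinOn (hΦ p)]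
  -- `0 ≤ h*(q) - h*(p) - ⟪Φ p, q - p⟫ ≤ ⟪Φ q - Φ p, q - p⟫` by minimality at `q` and at `p`.
  have hq' := (hΦ q).add_inner_le (Φ p - Φ q)
  have hp' := (hΦ p).add_inner_le (Φ q - Φ p)
  have hclose : ⟪Φ q - Φ p, q - p⟫ ≤ c * ‖q - p‖ :=
    (real_inner_le_norm _ _).trans
      (mul_le_mul_of_nonneg_right (mem_closedBall_iff_norm.1 hq) (norm_nonneg _))
  simp only [add_sub_cancel, inner_sub_left, inner_sub_right] at hq' hp' hclose ⊢
  rw [Real.norm_eq_abs, abs_le]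
  constructor <;> nlinarith [mul_nonneg hc.le (norm_nonneg (q - p))]

theorem isMinOn_gradient_convConj (h1 : H1 h) (h3 : H3 h) (p : Euc d) :
    IsMinOn (fun w => h w - ⟪w, p⟫) univ (gradient (convConj h) p) := by
  choose Φ hΦ using h3.exists_isMinOn_sub_inner h1.continuous
  rw [(hasGradientAt_convConj hΦ (continuous_of_isMinOn_sub_inner h1 h3 hΦ).continuousAt).gradient]
  exact hΦ p

end Conjugate

lemma Equiv.Perm.exists_notMem_and_mem_of_card_le {α : Type*} [DecidableEq α]
    (τ : Equiv.Perm α) {A B : Finset α} (hAB : A.card ≤ B.card) {i : α} (hi : i ∈ A)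
    (hτi : τ i ∉ B) : ∃ a ∉ A, τ a ∈ B := by
  have hlt : (A.erase i).card < (B.map τ.symm.toEmbedding).card := by
    rw [Finset.card_erase_of_mem hi, Finset.card_map]
    have := Finset.card_pos.2 ⟨i, hi⟩
    omega
  obtain ⟨a, haB, haA⟩ := Finset.exists_mem_notMem_of_card_lt_card hlt
  rw [Finset.mem_map_equiv, Equiv.symm_symm] at haB
  refine ⟨a, fun ha => haA (Finset.mem_erase.2 ⟨?_, ha⟩), haB⟩
  rintro rfl
  exact hτi haB

lemma Equiv.Perm.exists_not_lt_and_lt_of_lt {n ℓ m : ℕ} (hℓm : ℓ ≤ m) (τ : Equiv.Perm (Fin n))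
    {i : Fin n} (hi : (i : ℕ) < ℓ) (hτi : ¬ (τ i : ℕ) < m) :
    ∃ a : Fin n, ¬ (a : ℕ) < ℓ ∧ (τ a : ℕ) < m := by
  obtain ⟨a, haA, haB⟩ := τ.exists_notMem_and_mem_of_card_le
    (A := Finset.univ.filter fun i : Fin n => (i : ℕ) < ℓ)
    (B := Finset.univ.filter fun i : Fin n => (i : ℕ) < m)
    (Finset.card_le_card (Finset.monotone_filter_right _ fun i _ hi => lt_of_lt_of_le hi hℓm))
    (by simpa using hi) (by simpa using hτi)
  exact ⟨a, by simpa using haA, by simpa using haB⟩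

section Assignment

variable {d n : ℕ} {h : Euc d → ℝ} {s t : Fin n → Euc d} {σ : Equiv.Perm (Fin n)}

lemma IsOptAssign.cost_add_cost_le_swap (hσ : IsOptAssign h s t σ) (i a : Fin n) :
    cost h (s i) (t (σ i)) + cost h (s a) (t (σ a)) ≤
      cost h (s i) (t (σ a)) + cost h (s a) (t (σ i)) := by
  rcases eq_or_ne i a with rfl | hia
  · rfl
  have hswap := hσ ((Equiv.swap i a).trans σ)
  have hdiff : ∑ k, (cost h (s k) (t (σ (Equiv.swap i a k))) - cost h (s k) (t (σ k))) =
      (cost h (s i) (t (σ a)) - cost h (s i) (t (σ i))) +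
        (cost h (s a) (t (σ i)) - cost h (s a) (t (σ a))) := by
    rw [Finset.sum_eq_add i a hia (fun c _ hc => by simp [Equiv.swap_apply_of_ne_of_ne hc.1 hc.2])
      (by simp) (by simp), Equiv.swap_apply_left, Equiv.swap_apply_right]
  rw [Finset.sum_sub_distrib] at hdiff
  simp only [Equiv.trans_apply] at hswap
  linarith

lemma IsOptAssign.inner_le_of_isMinOn (hσ : IsOptAssign h s t σ) {i a : Fin n} {p : Euc d}
    (hmin : IsMinOn (fun w => h w - ⟪w, p⟫) univ (s i - t (σ a))) :
    ⟪s a - s i, p⟫ ≤ h (s a - t (σ i)) - h (s i - t (σ i)) := by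
  have hswap := hσ.cost_add_cost_le_swap i a
  have hsub := hmin.add_inner_le (s a - s i)
  rw [sub_add_sub_cancel'] at hsub
  simp only [cost] at hswap
  linarith

end Assignment

theorem discrete_upper_part_ii_general (d n : ℕ) (h : Euc d → ℝ)
    (h1 : H1 h) (h3 : H3 h)
    (u x : Fin n → Euc d)
    (σn : Equiv.Perm (Fin n))
    (j : Fin n) (v : Euc d) (hv : ‖v‖ = 1)
    -- relabeling `u_(i) = u (ρ i)`
    (ρ : Equiv.Perm (Fin n)) (ℓ : ℕ)
    (hlab : ∀ i : Fin n, ⟪v, u (ρ i) - u j⟫ ≤ 0 ↔ (i : ℕ) < ℓ)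
    (iℓ : Fin n) (hiℓ : (iℓ : ℕ) + 1 = ℓ) (hρiℓ : ρ iℓ = j)
    (z₀ : Euc d) (m : ℕ) (hℓm : ℓ ≤ m)
    -- contaminating points
    (z : ℕ → Euc d) (hz : ∀ k : ℕ, z k = u j - gradient (convConj h) (z₀ + (k : ℝ) • v))
    -- contaminated targets: `z k` with multiplicity `m`, together with `T(u_(i))` for `i > m`
    (y : ℕ → Fin n → Euc d)
    (hy : ∀ k : ℕ, ∀ i : Fin n, y k i = if (i : ℕ) < m then z k else x (σn (ρ i)))
    -- any choice of optimal assignments for the contaminated targets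
    (τ : ℕ → Equiv.Perm (Fin n))
    (hτ : ∀ k : ℕ, IsOptAssign h (fun i => u (ρ i)) (y k) (τ k)) :
    Tendsto (fun k : ℕ => ‖y k (τ k iℓ)‖) atTop atTop := by
  set P : ℕ → Euc d := fun k => z₀ + (k : ℝ) • v
  have hmin (k : ℕ) : IsMinOn (fun w => h w - ⟪w, P k⟫) univ (u j - z k) := by
    rw [hz, sub_sub_cancel]
    exact isMinOn_gradient_convConj h1 h3 _
  have hfar : ∀ᶠ k in atTop, ∀ a i : Fin n, 0 < ⟪v, u (ρ a) - u j⟫ →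
      h (u (ρ a) - x i) - h (u j - x i) < ⟪u (ρ a) - u j, P k⟫ := by
    refine eventually_all.2 fun a => eventually_all.2 fun i => ?_
    refine eventually_imp_distrib_left.2 fun ha => ?_
    rw [real_inner_comm] at ha
    exact (tendsto_inner_add_natCast_smul_atTop z₀ ha).eventually_gt_atTop _
  have hassign : ∀ᶠ k in atTop, y k (τ k iℓ) = z k := by
    filter_upwards [hfar] with k hk
    by_contra hne
    have hnot : ¬ (τ k iℓ : ℕ) < m := fun hlt => hne (by rw [hy, if_pos hlt])
    obtain ⟨a, haA, haB⟩ := (τ k).exists_not_lt_and_lt_of_lt hℓm (by omega) hnot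
    have hgap := hk a (σn (ρ (τ k iℓ))) (lt_of_not_ge (mt (hlab a).1 haA))
    have hswap := (hτ k).inner_le_of_isMinOn (i := iℓ) (a := a) (p := P k)
      (by simpa only [hy, if_pos haB, hρiℓ] using hmin k)
    simp only [hρiℓ, hy, if_neg hnot] at hswap
    linarith
  have hesc : Tendsto (fun k => ‖u j - z k‖) atTop atTop :=
    tendsto_norm_atTop_of_isMinOn_sub_inner h1.continuous hmin
      (tendsto_inner_add_natCast_smul_atTop z₀ (by rw [real_inner_self_eq_norm_sq, hv]; norm_num))
  refine tendsto_atTop_mono' _ (hassign.mono fun k hk => ?_)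
    (tendsto_atTop_add_const_right _ (-‖u j‖) hesc)
  simp only [hk]
  linarith [norm_sub_le (u j) (z k)]

/-- in the relabeled discrete setup with contaminating point
`z_k = u_j - ∇h*(z₀ + k v)` placed with multiplicity `m ≥ ℓ`, every choice of optimal
assignments `T_k` satisfies `‖T_k(u_j)‖ → ∞`. -/
theorem discrete_upper_part_ii (d n : ℕ) (hd : 1 ≤ d) (h : Euc d → ℝ)
    (hpos : ∀ x, 0 ≤ h x) (h1 : H1 h) (h2 : H2 h) (h3 : H3 h)
    (u x : Fin n → Euc d) (hu : Function.Injective u) (hx : Function.Injective x)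
    (σn : Equiv.Perm (Fin n)) (hσn : IsOptAssign h u x σn)
    (j : Fin n) (v : Euc d) (hv : ‖v‖ = 1)
    -- relabeling `u_(i) = u (ρ i)`
    (ρ : Equiv.Perm (Fin n)) (ℓ : ℕ) (hℓ1 : 1 ≤ ℓ) (hℓn : ℓ ≤ n)
    (hlab : ∀ i : Fin n, ⟪v, u (ρ i) - u j⟫ ≤ 0 ↔ (i : ℕ) < ℓ)
    (iℓ : Fin n) (hiℓ : (iℓ : ℕ) + 1 = ℓ) (hρiℓ : ρ iℓ = j)
    (z₀ : Euc d) (m : ℕ) (hm1 : 1 ≤ m) (hmn : m ≤ n) (hℓm : ℓ ≤ m)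
    -- contaminating points
    (z : ℕ → Euc d) (hz : ∀ k : ℕ, z k = u j - gradient (convConj h) (z₀ + (k : ℝ) • v))
    -- contaminated targets: `z k` with multiplicity `m`, together with `T(u_(i))` for `i > m`
    (y : ℕ → Fin n → Euc d)
    (hy : ∀ k : ℕ, ∀ i : Fin n, y k i = if (i : ℕ) < m then z k else x (σn (ρ i)))
    -- any choice of optimal assignments for the contaminated targets
    (τ : ℕ → Equiv.Perm (Fin n))
    (hτ : ∀ k : ℕ, IsOptAssign h (fun i => u (ρ i)) (y k) (τ k)) :
    Tendsto (fun k : ℕ => ‖y k (τ k iℓ)‖) atTop atTop :=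
  discrete_upper_part_ii_general d n h h1 h3 u x σn j v hv ρ ℓ hlab iℓ hiℓ hρiℓ z₀ m hℓm z hz y hy τ
    hτ

end
end

section
/- Assume the cost c(x,y) = h(x−y) satisfies (H1)–(H3). Let u_1,…,u_n ∈ ℝ^d be distinct and x_1,…,x_n ∈ ℝ^d be distinct. Fix j ∈ {1,…,n} and v ∈ S^{d−1}, and let ℓ be the number of sample points u_i lying in the halfspace {x : ⟨v, x − u_j⟩ ≤ 0} (note u_j itself is one of them). Then the finite sample breakdown point of T_{Q_n→P_n}(u_j) is at most ℓ/n. -/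
open Filter MeasureTheory Bornology Topology Set
open scoped RealInnerProductSpace ENNReal BigOperators Classical

noncomputable section

/-!
Replace the sample points `x_i` whose source `u_i` lies in the halfspace `⟪v, · - u_j⟫ ≤ 0` by a
single far point `p = u_j - q`, where `h` has the subgradient `t • v` at `q`; such `q` exists
because `h` is continuous and superlinear, and `‖q‖ → ∞` as `t → ∞`. For every `u_b` strictly
outside the halfspace, `h (u_b - p) ≥ h q + t ⟪v, u_b - u_j⟫` then beats every difference
`h (u_b - x_k) - h (u_j - x_k)`, so exchanging the targets of `u_j` and `u_b` in an optimal
assignment never increases its cost: some optimal assignment sends `u_j` to one of the copies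
of `p`, which is arbitrarily far away.
-/

section Assignment

variable {ι : Type*} [Fintype ι] [DecidableEq ι]

lemma Equiv.Perm.exists_notMem_apply_mem {σ : Equiv.Perm ι} {S : Finset ι} {j : ι}
    (hj : j ∈ S) (hσj : σ j ∉ S) : ∃ b ∉ S, σ b ∈ S := by
  by_contra! hcompl
  obtain ⟨b, hb, hbj⟩ := Finset.surjOn_of_injOn_of_card_le σ
    (s := Sᶜ) (t := Sᶜ) (fun b hb => by simpa using hcompl b (by simpa using hb))
    σ.injective.injOn le_rfl (by simpa using hσj)
  exact (Finset.mem_compl.1 hb) (σ.injective hbj ▸ hj)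

lemma Equiv.Perm.sum_comp_mul_swap_add {M : Type*} [AddCommGroup M] (f : ι → ι → M)
    (σ : Equiv.Perm ι) {a b : ι} (hab : a ≠ b) :
    ∑ i, f i ((σ * Equiv.swap a b) i) + (f a (σ a) + f b (σ b)) =
      ∑ i, f i (σ i) + (f a (σ b) + f b (σ a)) := by
  have hdiff : ∑ i, (f i ((σ * Equiv.swap a b) i) - f i (σ i)) =
      (f a (σ b) - f a (σ a)) + (f b (σ a) - f b (σ b)) := by
    rw [Fintype.sum_eq_add a b hab fun i hi => by
      simp [Equiv.swap_apply_of_ne_of_ne hi.1 hi.2]]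
    simp
  rw [Finset.sum_sub_distrib] at hdiff
  rw [← sub_eq_zero, ← sub_eq_zero.2 hdiff]
  abel

lemma exists_perm_isMin_apply_mem (f : ι → ι → ℝ) {S : Finset ι} {j : ι} (hj : j ∈ S)
    (hswap : ∀ b ∉ S, ∀ a ∈ S, ∀ k ∉ S, f j a + f b k ≤ f j k + f b a) :
    ∃ σ : Equiv.Perm ι, (∀ τ : Equiv.Perm ι, ∑ i, f i (σ i) ≤ ∑ i, f i (τ i)) ∧ σ j ∈ S := by
  obtain ⟨σ, hσ⟩ := Finite.exists_min fun σ : Equiv.Perm ι => ∑ i, f i (σ i)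
  by_cases hσj : σ j ∈ S
  · exact ⟨σ, hσ, hσj⟩
  obtain ⟨b, hbS, hσb⟩ := σ.exists_notMem_apply_mem hj hσj
  have hjb : j ≠ b := by rintro rfl; exact hbS hj
  refine ⟨σ * Equiv.swap j b, fun τ => ?_, by simpa using hσb⟩
  have hexchange := σ.sum_comp_mul_swap_add f hjb
  linarith [hσ τ, hswap b hbS (σ b) hσb (σ j) hσj]

end Assignment

lemma eventually_lt_norm_of_forall_add_inner_le {E : Type*} [NormedAddCommGroup E]
    [InnerProductSpace ℝ E] [ProperSpace E] {f : E → ℝ} (hf : Continuous f) {v : E}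
    (hv : v ≠ 0) (R : ℝ) :
    ∀ᶠ t : ℝ in atTop, ∀ q, (∀ y, f q + ⟪t • v, y⟫ ≤ f (q + y)) → R < ‖q‖ := by
  obtain ⟨U, hU⟩ := (isCompact_closedBall (0 : E) (R + ‖v‖)).exists_bound_of_continuousOn
    hf.continuousOn
  have hv2 : 0 < ‖v‖ ^ 2 := by positivity
  filter_upwards [eventually_gt_atTop (2 * U / ‖v‖ ^ 2)] with t ht q hq
  by_contra! hqR
  have hstep := hq v
  rw [real_inner_smul_left, real_inner_self_eq_norm_sq] at hstep
  have hfq := hU q (mem_closedBall_zero_iff.2 (by linarith [norm_nonneg v]))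
  have hfqv := hU (q + v) (mem_closedBall_zero_iff.2 ((norm_add_le _ _).trans (by linarith)))
  rw [Real.norm_eq_abs, abs_le] at hfq hfqv
  rw [div_lt_iff₀ hv2] at ht
  linarith

section Cost

variable {d : ℕ} {h : Euc d → ℝ}

lemma H3.exists_forall_add_inner_le (h3 : H3 h) (hc : Continuous h) (w : Euc d) :
    ∃ q, ∀ y, h q + ⟪w, y⟫ ≤ h (q + y) := by
  have hlim : Tendsto (fun y => h y - ⟪w, y⟫) (cocompact (Euc d)) atTop := by
    obtain ⟨R, hR⟩ := h3 (‖w‖ + 1)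
    refine tendsto_atTop_mono' _ ?_ tendsto_norm_cocompact_atTop
    filter_upwards [tendsto_norm_cocompact_atTop.eventually_ge_atTop R] with y hy
    nlinarith [hR y hy, real_inner_le_norm w y]
  obtain ⟨q, hq⟩ := (hc.sub (continuous_const.inner continuous_id)).exists_forall_le hlim
  refine ⟨q, fun y => ?_⟩
  have hqy : h q - ⟪w, q⟫ ≤ h (q + y) - ⟪w, q + y⟫ := hq (q + y)
  rw [inner_add_right] at hqy
  linarith

lemma H3.exists_norm_gt_forall_add_le {ι κ : Type*} [Finite ι] [Finite κ] (h3 : H3 h)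
    (hc : Continuous h) (u : ι → Euc d) (x : κ → Euc d) (j : ι) {v : Euc d} (hv : v ≠ 0)
    (R : ℝ) :
    ∃ p : Euc d, R < ‖p‖ ∧ ∀ b, 0 < ⟪v, u b - u j⟫ → ∀ k,
      h (u j - p) + h (u b - x k) ≤ h (u j - x k) + h (u b - p) := by
  obtain ⟨K, hK⟩ := Finite.exists_le fun bk : ι × κ => h (u bk.1 - x bk.2) - h (u j - x bk.2)
  have hbeyond : ∀ᶠ t in atTop, ∀ b, 0 < ⟪v, u b - u j⟫ → K ≤ t * ⟪v, u b - u j⟫ := by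
    refine eventually_all.2 fun b => ?_
    by_cases hb : 0 < ⟪v, u b - u j⟫
    · filter_upwards [(tendsto_id.atTop_mul_const hb).eventually_ge_atTop K] with t ht
      exact fun _ => ht
    · exact .of_forall fun _ hb' => absurd hb' hb
  obtain ⟨t, ht, hfar⟩ :=
    (hbeyond.and (eventually_lt_norm_of_forall_add_inner_le hc hv (R + ‖u j‖))).exists
  obtain ⟨q, hq⟩ := h3.exists_forall_add_inner_le hc (t • v)
  refine ⟨u j - q, ?_, fun b hb k => ?_⟩
  · linarith [hfar q hq, norm_sub_norm_le q (u j), norm_sub_rev q (u j)]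
  · have hqb := hq (u b - u j)
    rw [real_inner_smul_left] at hqb
    rw [sub_sub_cancel, show u b - (u j - q) = q + (u b - u j) by abel]
    linarith [ht b hb, hK (b, k)]

end Cost

lemma sharesAtoms_piecewise {d n : ℕ} (x y : Fin n → Euc d) (S : Finset (Fin n)) :
    SharesAtoms x (S.piecewise y x) (n - S.card) :=
  ⟨Sᶜ, by rw [Finset.card_compl, Fintype.card_fin], id, injOn_id _,
    fun _ hi => Finset.piecewise_eq_of_notMem _ _ _ (Finset.mem_compl.1 hi)⟩

lemma not_isBounded_fsBadSet_halfspace {d n : ℕ} {h : Euc d → ℝ} (h3 : H3 h)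
    (hc : Continuous h) (u x : Fin n → Euc d) (j : Fin n) {v : Euc d} (hv : v ≠ 0) :
    ¬ IsBounded (fsBadSet h u x j (Finset.univ.filter fun i => ⟪v, u i - u j⟫ ≤ 0).card) := by
  set S := Finset.univ.filter fun i => ⟪v, u i - u j⟫ ≤ 0
  have hjS : j ∈ S := by simp [S]
  rw [isBounded_iff_forall_norm_le]
  rintro ⟨R, hR⟩
  obtain ⟨p, hpR, hswap⟩ := h3.exists_norm_gt_forall_add_le hc u x j hv R
  set x' := S.piecewise (fun _ => p) x
  obtain ⟨σ, hσ, hσj⟩ := exists_perm_isMin_apply_mem (fun i k => cost h (u i) (x' k)) hjS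
    fun b hb a ha k hk => by
      simpa [cost, x', ha, hk] using hswap b (by simpa [S] using hb) k
  have hp : p ∈ fsBadSet h u x j S.card :=
    ⟨x', σ, sharesAtoms_piecewise x _ S, hσ, by simp [x', hσj]⟩
  exact (hR p hp).not_gt hpR

theorem finiteSampleBP_le_halfspace_count_general (d n : ℕ) (h : Euc d → ℝ)
    (h1 : H1 h) (h3 : H3 h)
    (u x : Fin n → Euc d)
    (j : Fin n) (v : Euc d) (hv : ‖v‖ = 1) :
    finiteSampleBP h u x j ≤
      ((Finset.univ.filter fun i => ⟪v, u i - u j⟫ ≤ 0).card : ℝ) / n := by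
  have hc : Continuous h := continuousOn_univ.1 (h1.convexOn.continuousOn isOpen_univ)
  have hv0 : v ≠ 0 := norm_ne_zero_iff.1 (by rw [hv]; exact one_ne_zero)
  have hj : j ∈ Finset.univ.filter fun i => ⟪v, u i - u j⟫ ≤ 0 := by simp
  unfold finiteSampleBP
  gcongr
  exact Nat.sInf_le ⟨Finset.card_pos.2 ⟨j, hj⟩,
    (Finset.card_le_univ _).trans_eq (Fintype.card_fin n),
    not_isBounded_fsBadSet_halfspace h3 hc u x j hv0⟩

/-- for any unit vector `v`, if `ℓ` is the number of sample points in the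
halfspace `{x : ⟨v, x - u_j⟩ ≤ 0}`, then the finite sample breakdown point of
`T_{Q_n→P_n}(u_j)` is at most `ℓ/n`. -/
theorem finiteSampleBP_le_halfspace_count (d n : ℕ) (hd : 1 ≤ d) (h : Euc d → ℝ)
    (hpos : ∀ x, 0 ≤ h x) (h1 : H1 h) (h2 : H2 h) (h3 : H3 h)
    (u x : Fin n → Euc d) (hu : Function.Injective u) (hx : Function.Injective x)
    (j : Fin n) (v : Euc d) (hv : ‖v‖ = 1) :
    finiteSampleBP h u x j ≤
      ((Finset.univ.filter fun i => ⟪v, u i - u j⟫ ≤ 0).card : ℝ) / n :=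
  finiteSampleBP_le_halfspace_count_general d n h h1 h3 u x j v hv

end
end

section
/- Let Q be a Borel probability measure on ℝ^d that is absolutely continuous with respect to Lebesgue measure, let S ⊂ ℝ^d be a closed convex set with Q(S) = 1, and let u ∈ ℝ^d satisfy TD(u;Q) > 0. Then u ∈ S. -/
open Filter MeasureTheory Bornology Topology Set
open scoped RealInnerProductSpace ENNReal BigOperators Classical

noncomputable section

theorem Convex.exists_inner_sub_pos_of_notMem {E : Type*} [NormedAddCommGroup E]
    [InnerProductSpace ℝ E] [CompleteSpace E] {S : Set E} (hScl : IsClosed S)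
    (hSconv : Convex ℝ S) (hSne : S.Nonempty) {u : E} (hu : u ∉ S) :
    ∃ v : E, v ≠ 0 ∧ ∀ x ∈ S, 0 < ⟪v, x - u⟫ := by
  obtain ⟨f, s, hfu, hfS⟩ := geometric_hahn_banach_point_closed hSconv hScl hu
  set v := (InnerProductSpace.toDual ℝ E).symm f
  have hv : ∀ x ∈ S, 0 < ⟪v, x - u⟫ := fun x hx => by
    rw [inner_sub_right, InnerProductSpace.toDual_symm_apply,
      InnerProductSpace.toDual_symm_apply]
    linarith [hfS x hx]
  obtain ⟨x, hx⟩ := hSne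
  refine ⟨v, fun h0 => ?_, hv⟩
  simpa [h0] using hv x hx

theorem tukeyDepth_le_measure_halfspace {d : ℕ} (Q : Measure (Euc d)) (u : Euc d) {v : Euc d}
    (hv : v ≠ 0) : tukeyDepth Q u ≤ Q {x | ⟪v, x - u⟫ ≤ 0} := by
  have hpos : 0 < ‖v‖⁻¹ := inv_pos.mpr (norm_pos_iff.mpr hv)
  have hunit : ‖‖v‖⁻¹ • v‖ = 1 := by
    rw [norm_smul, norm_inv, norm_norm, inv_mul_cancel₀ (norm_ne_zero_iff.mpr hv)]
  refine (iInf₂_le (‖v‖⁻¹ • v) hunit).trans_eq (congrArg Q (Set.ext fun x => ?_))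
  simp [real_inner_smul_left, mul_nonpos_iff, hpos.not_ge, hpos.le]

theorem mem_of_tukeyDepth_pos_general (d : ℕ)
    (Q : Measure (Euc d)) [IsProbabilityMeasure Q]
    (S : Set (Euc d)) (hScl : IsClosed S) (hSconv : Convex ℝ S) (hQS : Q S = 1)
    (u : Euc d) (hTD : 0 < tukeyDepth Q u) :
    u ∈ S := by
  by_contra hu
  have hSne : S.Nonempty := nonempty_of_measure_ne_zero (μ := Q) (by simp [hQS])
  obtain ⟨v, hv, hvS⟩ := hSconv.exists_inner_sub_pos_of_notMem hScl hSne hu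
  have hnull : Q {x | ⟪v, x - u⟫ ≤ 0} = 0 :=
    measure_mono_null (fun x hx hxS => (hvS x hxS).not_ge hx)
      ((prob_compl_eq_zero_iff hScl.measurableSet).2 hQS)
  exact hTD.ne' (nonpos_iff_eq_zero.1 (hnull ▸ tukeyDepth_le_measure_halfspace Q u hv))

/-- if `Q ≪ Leb`, `S` is closed convex with `Q(S) = 1` and `TD(u;Q) > 0`,
then `u ∈ S`. -/
theorem mem_of_tukeyDepth_pos (d : ℕ) (hd : 1 ≤ d)
    (Q : Measure (Euc d)) [IsProbabilityMeasure Q] (hQ : Q ≪ volume)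
    (S : Set (Euc d)) (hScl : IsClosed S) (hSconv : Convex ℝ S) (hQS : Q S = 1)
    (u : Euc d) (hTD : 0 < tukeyDepth Q u) :
    u ∈ S :=
  mem_of_tukeyDepth_pos_general d Q S hScl hSconv hQS u hTD

end
end

section
/- Let d ≥ 2 and let u_1,…,u_n ∈ ℝ^d be distinct points in general position with n ≥ d. Then for every j ∈ {1,…,n} and every unit vector w ∈ S^{d−1}, there exists a unit vector v ∈ S^{d−1} such that {i : ⟨v, u_i − u_j⟩ < 0} = {i : ⟨w, u_i − u_j⟩ < 0} and j is the only index i with ⟨v, u_i − u_j⟩ = 0. -/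
open Filter MeasureTheory Bornology Topology Set
open scoped RealInnerProductSpace ENNReal BigOperators Classical

noncomputable section

/-!
The points `u i` (`i ≠ j`) on the hyperplane through `u j` orthogonal to `w` are fewer than `d`:
general position makes their differences `u i - u j` linearly independent inside the
`(d - 1)`-dimensional space `wᗮ`. Hence some `z` has `⟪u i - u j, z⟫ = 1` for all of them, and
`v = (w + ε z) / ‖w + ε z‖` with small `ε > 0` keeps every strict sign of `w` while pushing
those points to the positive side.
-/

section InnerProductSpace

variable {E : Type*} [NormedAddCommGroup E] [InnerProductSpace ℝ E]

theorem LinearIndependent.exists_inner_eq_one {ι : Type*} [Finite ι] {b : ι → E}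
    (hb : LinearIndependent ℝ b) : ∃ z : E, ∀ i, ⟪b i, z⟫ = 1 := by
  let K := Submodule.span ℝ (range b)
  have : FiniteDimensional ℝ K := FiniteDimensional.span_of_finite ℝ (finite_range b)
  let f : StrongDual ℝ K := LinearMap.toContinuousLinearMap (Module.Basis.span hb).sumCoords
  refine ⟨(InnerProductSpace.toDual ℝ K).symm f, fun i => ?_⟩
  have hi : ⟪(InnerProductSpace.toDual ℝ K).symm f, Module.Basis.span hb i⟫ = 1 := by
    rw [InnerProductSpace.toDual_symm_apply]
    exact (Module.Basis.span hb).sumCoords_self_apply i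
  rw [real_inner_comm, ← hi, Module.Basis.span_apply, Submodule.coe_inner]

theorem LinearIndependent.card_lt_finrank_of_inner_eq_zero [FiniteDimensional ℝ E]
    {ι : Type*} [Fintype ι] {b : ι → E} (hb : LinearIndependent ℝ b) {w : E} (hw : w ≠ 0)
    (hbw : ∀ i, ⟪w, b i⟫ = 0) : Fintype.card ι < Module.finrank ℝ E := by
  have hle : Submodule.span ℝ (range b) ≤ (ℝ ∙ w)ᗮ := by
    rw [Submodule.span_le]
    rintro _ ⟨i, rfl⟩
    exact Submodule.mem_orthogonal_singleton_iff_inner_right.mpr (hbw i)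
  have := Submodule.finrank_mono hle
  have := (ℝ ∙ w).finrank_add_finrank_orthogonal
  rw [finrank_span_eq_card hb, finrank_span_singleton hw] at *
  omega

theorem eventually_inner_add_smul_sign {ι : Type*} [Finite ι] (x : ι → E) (w z : E) :
    ∀ᶠ ε in 𝓝 (0 : ℝ), ∀ i, (⟪w, x i⟫ < 0 → ⟪w + ε • z, x i⟫ < 0) ∧
      (0 < ⟪w, x i⟫ → 0 < ⟪w + ε • z, x i⟫) := by
  refine eventually_all.mpr fun i => ?_
  have hcont : Tendsto (fun ε : ℝ => ⟪w + ε • z, x i⟫) (𝓝 0) (𝓝 ⟪w, x i⟫) := by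
    have : Continuous fun ε : ℝ => ⟪w + ε • z, x i⟫ := by fun_prop
    simpa using this.tendsto 0
  exact (eventually_imp_distrib_left.mpr fun h => hcont.eventually (eventually_lt_nhds h)).and
    (eventually_imp_distrib_left.mpr fun h => hcont.eventually (eventually_gt_nhds h))

theorem exists_ne_zero_inner_neg_iff_inner_eq_zero_iff {ι : Type*} [Finite ι] (x : ι → E)
    {w z : E} (hw : w ≠ 0) (hz : ∀ i, ⟪w, x i⟫ = 0 → x i ≠ 0 → 0 < ⟪x i, z⟫) :
    ∃ y : E, y ≠ 0 ∧ ∀ i, (⟪y, x i⟫ < 0 ↔ ⟪w, x i⟫ < 0) ∧ (⟪y, x i⟫ = 0 ↔ x i = 0) := by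
  have hne : ∀ᶠ ε in 𝓝 (0 : ℝ), w + ε • z ≠ 0 := by
    have : Continuous fun ε : ℝ => w + ε • z := by fun_prop
    simpa using this.continuousAt.eventually_ne (by simpa using hw)
  obtain ⟨ε, ⟨hsign, hy⟩, hε⟩ := (((eventually_inner_add_smul_sign x w z).and hne).filter_mono
    nhdsWithin_le_nhds |>.and (self_mem_nhdsWithin : ∀ᶠ ε in 𝓝[>] (0 : ℝ), 0 < ε)).exists
  refine ⟨w + ε • z, hy, fun i => ?_⟩
  have hx : ⟪w, x i⟫ ≠ 0 → x i ≠ 0 := fun h hx => h (by simp [hx])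
  rcases lt_trichotomy ⟪w, x i⟫ 0 with h | h | h
  · have := (hsign i).1 h
    exact ⟨iff_of_true this h, iff_of_false this.ne (hx h.ne)⟩
  · have hyx : ⟪w + ε • z, x i⟫ = ε * ⟪x i, z⟫ := by
      rw [inner_add_left, h, real_inner_smul_left, real_inner_comm, zero_add]
    by_cases hxi : x i = 0
    · simp [hxi]
    · have := mul_pos (mem_Ioi.mp hε) (hz i h hxi)
      rw [hyx]
      exact ⟨iff_of_false this.not_gt h.not_lt, iff_of_false this.ne' hxi⟩
  · have := (hsign i).2 h
    exact ⟨iff_of_false this.not_gt h.not_gt, iff_of_false this.ne' (hx h.ne')⟩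

theorem exists_norm_eq_one_inner_neg_iff_inner_eq_zero_iff {ι : Type*} [Finite ι] (x : ι → E)
    {w z : E} (hw : w ≠ 0) (hz : ∀ i, ⟪w, x i⟫ = 0 → x i ≠ 0 → 0 < ⟪x i, z⟫) :
    ∃ v : E, ‖v‖ = 1 ∧ ∀ i, (⟪v, x i⟫ < 0 ↔ ⟪w, x i⟫ < 0) ∧ (⟪v, x i⟫ = 0 ↔ x i = 0) := by
  obtain ⟨y, hy, hyx⟩ := exists_ne_zero_inner_neg_iff_inner_eq_zero_iff x hw hz
  have hc : 0 < ‖y‖⁻¹ := by positivity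
  refine ⟨‖y‖⁻¹ • y, norm_smul_inv_norm hy, fun i => ?_⟩
  rw [real_inner_smul_left, ← smul_eq_mul, smul_neg_iff_of_pos_left hc,
    smul_eq_zero_iff_right hc.ne']
  exact hyx i

end InnerProductSpace

theorem InGeneralPosition.linearIndependent_sub {d n : ℕ} {u : Fin n → Euc d}
    (hgp : InGeneralPosition u) {j : Fin n} {s : Finset (Fin n)} (hjs : j ∉ s)
    (hs : s.card ≤ d) : LinearIndependent ℝ fun i : s => u i - u j := by
  have hind := hgp (insert j s) (by rw [Finset.card_insert_of_notMem hjs]; omega)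
  rw [affineIndependent_iff_linearIndependent_vsub ℝ _ ⟨j, Finset.mem_insert_self j s⟩] at hind
  let f : s → {i : (insert j s : Finset (Fin n)) // i ≠ ⟨j, Finset.mem_insert_self j s⟩} :=
    fun i => ⟨⟨i, Finset.mem_insert_of_mem i.2⟩, fun h => hjs (Subtype.mk.inj h ▸ i.2)⟩
  exact hind.comp f fun a b hab => Subtype.ext (congrArg (fun i => (i.1 : Fin n)) hab)

theorem InGeneralPosition.card_filter_inner_eq_zero_lt {d n : ℕ} {u : Fin n → Euc d}
    (hgp : InGeneralPosition u) (j : Fin n) {w : Euc d} (hw : w ≠ 0) :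
    (Finset.univ.filter fun i => i ≠ j ∧ ⟪w, u i - u j⟫ = 0).card < d := by
  by_contra! h
  obtain ⟨s, hsZ, hs⟩ := Finset.exists_subset_card_eq h
  have hli := hgp.linearIndependent_sub (j := j) (fun hj => by simpa using hsZ hj) hs.le
  have := hli.card_lt_finrank_of_inner_eq_zero hw fun i => (Finset.mem_filter.mp (hsZ i.2)).2.2
  rw [Fintype.card_coe, hs, finrank_euclideanSpace_fin] at this
  exact lt_irrefl d this

theorem exists_direction_generalPosition_general (d n : ℕ)
    (u : Fin n → Euc d) (hu : Function.Injective u)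
    (hgp : InGeneralPosition u) (j : Fin n)
    (w : Euc d) (hw : ‖w‖ = 1) :
    ∃ v : Euc d, ‖v‖ = 1 ∧
      {i : Fin n | ⟪v, u i - u j⟫ < 0} = {i : Fin n | ⟪w, u i - u j⟫ < 0} ∧
      {i : Fin n | ⟪v, u i - u j⟫ = 0} = {j} := by
  have hw0 : w ≠ 0 := norm_ne_zero_iff.mp (hw ▸ one_ne_zero)
  set Z := Finset.univ.filter fun i => i ≠ j ∧ ⟪w, u i - u j⟫ = 0
  obtain ⟨z, hz⟩ := (hgp.linearIndependent_sub (j := j) (s := Z) (by simp [Z])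
    (hgp.card_filter_inner_eq_zero_lt j hw0).le).exists_inner_eq_one
  have hzpos : ∀ i, ⟪w, u i - u j⟫ = 0 → u i - u j ≠ 0 → 0 < ⟪u i - u j, z⟫ := by
    intro i hi hx
    have hij : i ≠ j := fun h => hx (by rw [h, sub_self])
    rw [hz ⟨i, by simp [Z, hi, hij]⟩]
    exact one_pos
  obtain ⟨v, hv, hvu⟩ := exists_norm_eq_one_inner_neg_iff_inner_eq_zero_iff _ hw0 hzpos
  refine ⟨v, hv, Set.ext fun i => (hvu i).1, Set.ext fun i => ?_⟩
  simpa [sub_eq_zero, hu.eq_iff] using (hvu i).2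

/-- for points in general position (`d ≥ 2`, `n ≥ d`), any halfspace direction
`w` can be perturbed to a direction `v` keeping the same strictly-negative side and whose
boundary hyperplane through `u_j` contains no other sample point. -/
theorem exists_direction_generalPosition (d n : ℕ) (hd : 2 ≤ d)
    (u : Fin n → Euc d) (hu : Function.Injective u)
    (hgp : InGeneralPosition u) (hn : d ≤ n) (j : Fin n)
    (w : Euc d) (hw : ‖w‖ = 1) :
    ∃ v : Euc d, ‖v‖ = 1 ∧
      {i : Fin n | ⟪v, u i - u j⟫ < 0} = {i : Fin n | ⟪w, u i - u j⟫ < 0} ∧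
      {i : Fin n | ⟪v, u i - u j⟫ = 0} = {j} :=
  exists_direction_generalPosition_general d n u hu hgp j w hw

end
end

section
/- Let h : ℝ^d → ℝ be strictly convex with h(x)/‖x‖ → ∞ as ‖x‖ → ∞. Then the convex conjugate h* is finite and differentiable everywhere on ℝ^d, and for every z_0 ∈ ℝ^d and every unit vector v ∈ S^{d−1}, ‖∇h*(z_0 + k v)‖ → ∞ as k → ∞. -/
open Filter MeasureTheory Bornology Topology Set
open scoped RealInnerProductSpace ENNReal BigOperators Classical

noncomputable section

/-!
Superlinearity and continuity make `x ↦ ⟪x, y⟫ - h x` attain its supremum `h*(y)`, and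
strict convexity makes the maximizer `x(y)` unique. By compactness `x(y)` depends continuously
on `y`, and comparing the suprema at `y` and `z` squeezes `h*(z) - h*(y) - ⟪x(y), z - y⟫`
between `0` and `⟪x(z) - x(y), z - y⟫`, so `∇h*(y) = x(y)`. Finally, if `‖x(z₀ + k v)‖ ≤ B` then
`h*(z₀ + k v) ≤ B k + O(1)`, whereas testing the supremum at `(B + 1) v` gives
`h*(z₀ + k v) ≥ (B + 1) k - O(1)`, which is impossible for large `k`.
-/

theorem MapClusterPt.prodMk_of_tendsto {X Y α : Type*} [TopologicalSpace X] [TopologicalSpace Y]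
    {l : Filter α} {f : α → X} {g : α → Y} {x : X} {y : Y}
    (hf : MapClusterPt x l f) (hg : Tendsto g l (𝓝 y)) :
    MapClusterPt (y, x) l fun a => (g a, f a) := by
  rw [((𝓝 y).basis_sets.prod_nhds (𝓝 x).basis_sets).mapClusterPt_iff_frequently]
  rintro ⟨s, t⟩ ⟨hs, ht⟩
  exact ((mapClusterPt_iff_frequently.1 hf t ht).and_eventually (hg hs)).mono
    fun a ha => ⟨ha.2, ha.1⟩

section ConvexConjugate

variable {E : Type*} [NormedAddCommGroup E] [InnerProductSpace ℝ E] {h : E → ℝ}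

def Superlinear (h : E → ℝ) : Prop :=
  ∀ C : ℝ, ∃ R : ℝ, ∀ x : E, R ≤ ‖x‖ → C * ‖x‖ ≤ h x

def conjArgmax (h : E → ℝ) (y : E) : E :=
  Classical.epsilon fun x => ∀ w, ⟪w, y⟫ - h w ≤ ⟪x, y⟫ - h x

/-- For `‖z‖ ≤ K`, only points of a fixed ball can do better than the origin. -/
theorem Superlinear.exists_norm_le (h3 : Superlinear h) (K : ℝ) :
    ∃ ρ, ∀ z x : E, ‖z‖ ≤ K → -h 0 ≤ ⟪x, z⟫ - h x → ‖x‖ ≤ ρ := by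
  obtain ⟨R, hR⟩ := h3 (K + 1)
  refine ⟨max R (h 0), fun z x hz hx => ?_⟩
  by_contra! hlt
  have hgrowth := hR x ((le_max_left _ _).trans hlt.le)
  have hinner : ⟪x, z⟫ ≤ ‖x‖ * K :=
    (real_inner_le_norm x z).trans (mul_le_mul_of_nonneg_left hz (norm_nonneg x))
  linarith [le_max_right R (h 0)]

theorem exists_forall_inner_sub_le [ProperSpace E] (hc : Continuous h) (h3 : Superlinear h)
    (y : E) : ∃ x, ∀ w, ⟪w, y⟫ - h w ≤ ⟪x, y⟫ - h x := by
  obtain ⟨ρ, hρ⟩ := h3.exists_norm_le ‖y‖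
  refine ((continuous_id.inner continuous_const).sub hc).exists_forall_ge' 0 ?_
  filter_upwards [tendsto_norm_cocompact_atTop.eventually_gt_atTop ρ] with x hx
  by_contra! hlt
  exact hx.not_ge (hρ y x le_rfl (by simpa using hlt.le))

theorem conjArgmax_spec [ProperSpace E] (hc : Continuous h) (h3 : Superlinear h) (y : E) :
    ∀ w, ⟪w, y⟫ - h w ≤ ⟪conjArgmax h y, y⟫ - h (conjArgmax h y) :=
  Classical.epsilon_spec (exists_forall_inner_sub_le hc h3 y)

theorem isGreatest_range_inner_sub [ProperSpace E] (hc : Continuous h) (h3 : Superlinear h)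
    (y : E) :
    IsGreatest (range fun x => ⟪x, y⟫ - h x) (⟪conjArgmax h y, y⟫ - h (conjArgmax h y)) :=
  ⟨mem_range_self _, forall_mem_range.2 (conjArgmax_spec hc h3 y)⟩

theorem iSup_inner_sub_eq [ProperSpace E] (hc : Continuous h) (h3 : Superlinear h) (y : E) :
    ⨆ x, ⟪x, y⟫ - h x = ⟪conjArgmax h y, y⟫ - h (conjArgmax h y) :=
  (isGreatest_range_inner_sub hc h3 y).csSup_eq

theorem eq_conjArgmax [FiniteDimensional ℝ E] (h1 : StrictConvexOn ℝ univ h)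
    (h3 : Superlinear h) {y x : E} (hx : ∀ w, ⟪w, y⟫ - h w ≤ ⟪x, y⟫ - h x) :
    x = conjArgmax h y := by
  have hconc : StrictConcaveOn ℝ univ fun x => ⟪x, y⟫ - h x :=
    (((innerₛₗ ℝ).flip y).concaveOn convex_univ).sub_strictConvexOn h1
  exact hconc.eq_of_isMaxOn (isMaxOn_univ_iff.2 hx)
    (isMaxOn_univ_iff.2 (conjArgmax_spec h1.convexOn.locallyLipschitz.continuous h3 y))
    (mem_univ _) (mem_univ _)

theorem continuous_conjArgmax [FiniteDimensional ℝ E] (h1 : StrictConvexOn ℝ univ h)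
    (h3 : Superlinear h) : Continuous (conjArgmax h) := by
  have hc : Continuous h := h1.convexOn.locallyLipschitz.continuous
  have hclosed : IsClosed {p : E × E | ∀ w, ⟪w, p.1⟫ - h w ≤ ⟪p.2, p.1⟫ - h p.2} := by
    simp only [ofPred_forall]
    exact isClosed_iInter fun w => isClosed_le (by fun_prop) (by fun_prop)
  refine continuous_iff_continuousAt.2 fun y => ?_
  obtain ⟨ρ, hρ⟩ := h3.exists_norm_le (‖y‖ + 1)
  refine (isCompact_closedBall (0 : E) ρ).tendsto_nhds_of_unique_mapClusterPt ?_
    fun x _ hx => eq_conjArgmax h1 h3 ?_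
  · filter_upwards [Metric.closedBall_mem_nhds y one_pos] with z hz
    exact mem_closedBall_zero_iff.2
      (hρ z _ (norm_le_of_mem_closedBall hz) (by simpa using conjArgmax_spec hc h3 z 0))
  · exact hclosed.mem_of_mapClusterPt (hx.prodMk_of_tendsto tendsto_id)
      (Eventually.of_forall (conjArgmax_spec hc h3))

/-- Danskin's formula for the convex conjugate. -/
theorem hasGradientAt_iSup_inner_sub [FiniteDimensional ℝ E] (h1 : StrictConvexOn ℝ univ h)
    (h3 : Superlinear h) (y : E) :
    HasGradientAt (fun y => ⨆ x, ⟪x, y⟫ - h x) (conjArgmax h y) y := by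
  have hc : Continuous h := h1.convexOn.locallyLipschitz.continuous
  rw [hasGradientAt_iff_isLittleO, Asymptotics.isLittleO_iff]
  intro c hcpos
  have hnear : ∀ᶠ z in 𝓝 y, ‖conjArgmax h z - conjArgmax h y‖ < c :=
    (tendsto_iff_norm_sub_tendsto_zero.1 ((continuous_conjArgmax h1 h3).tendsto y)
      ).eventually_lt_const hcpos
  filter_upwards [hnear] with z hz
  simp only [iSup_inner_sub_eq hc h3]
  set xy := conjArgmax h y
  set xz := conjArgmax h z
  have hlower := conjArgmax_spec hc h3 z xy
  have hupper := conjArgmax_spec hc h3 y xz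
  have hcs := real_inner_le_norm (xz - xy) (z - y)
  have hcs' := mul_le_mul_of_nonneg_right hz.le (norm_nonneg (z - y))
  simp only [inner_sub_left, inner_sub_right] at hcs ⊢
  rw [Real.norm_eq_abs, abs_of_nonneg (by linarith)]
  linarith

theorem tendsto_norm_conjArgmax_atTop [ProperSpace E] (hc : Continuous h) (h3 : Superlinear h)
    (z₀ v : E) (hv : ‖v‖ = 1) :
    Tendsto (fun k : ℝ => ‖conjArgmax h (z₀ + k • v)‖) atTop atTop := by
  obtain ⟨x₀, hx₀⟩ := exists_forall_inner_sub_le hc h3 0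
  refine tendsto_atTop.2 fun B => ?_
  filter_upwards [eventually_gt_atTop
    (max 0 (B * ‖z₀‖ - h x₀ - (B + 1) * ⟪v, z₀⟫ + h ((B + 1) • v)))] with k hk
  rw [max_lt_iff] at hk
  by_contra! hB
  set z := z₀ + k • v
  set x := conjArgmax h z
  have hmin : h x₀ ≤ h x := by simpa using hx₀ x
  have htest := conjArgmax_spec hc h3 z ((B + 1) • v)
  have htest_inner : ⟪(B + 1) • v, z⟫ = (B + 1) * (⟪v, z₀⟫ + k) := by
    simp only [z, inner_add_right, real_inner_smul_left, real_inner_smul_right,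
      real_inner_self_eq_norm_sq, hv]
    ring
  have hz : ‖z‖ ≤ ‖z₀‖ + k := by
    simpa [norm_smul, hv, abs_of_pos hk.1] using norm_add_le z₀ (k • v)
  have hx_inner : ⟪x, z⟫ ≤ B * (‖z₀‖ + k) :=
    (real_inner_le_norm x z).trans
      (mul_le_mul hB.le hz (norm_nonneg z) ((norm_nonneg x).trans hB.le))
  linarith

end ConvexConjugate

/-- for `h` strictly convex and superlinear, the convex conjugate `h*` is finite
and differentiable everywhere, and `‖∇h*(z₀ + k v)‖ → ∞` as `k → ∞` for any unit `v`. -/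
theorem convConj_differentiable_and_gradient_tendsto (d : ℕ) (h : Euc d → ℝ)
    (h1 : StrictConvexOn ℝ Set.univ h)
    (h3 : ∀ C : ℝ, ∃ R : ℝ, ∀ x : Euc d, R ≤ ‖x‖ → C * ‖x‖ ≤ h x) :
    (∀ y : Euc d, BddAbove (Set.range fun x : Euc d => ⟪x, y⟫ - h x)) ∧
    Differentiable ℝ (convConj h) ∧
    ∀ z₀ v : Euc d, ‖v‖ = 1 →
      Tendsto (fun k : ℕ => ‖gradient (convConj h) (z₀ + (k : ℝ) • v)‖) atTop atTop := by
  have hc : Continuous h := h1.convexOn.locallyLipschitz.continuous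
  have hgrad (y : Euc d) : HasGradientAt (convConj h) (conjArgmax h y) y :=
    hasGradientAt_iSup_inner_sub h1 h3 y
  refine ⟨fun y => (isGreatest_range_inner_sub hc h3 y).bddAbove,
    fun y => (hgrad y).differentiableAt, fun z₀ v hv => ?_⟩
  rw [show gradient (convConj h) = conjArgmax h from funext fun y => (hgrad y).gradient]
  exact (tendsto_norm_conjArgmax_atTop hc h3 z₀ v hv).comp tendsto_natCast_atTop_atTop
end
end

section
/- Assume the cost c(x,y) = h(x−y) satisfies (H1)–(H3). Let Q be a Borel probability measure on ℝ^d absolutely continuous with respect to Lebesgue measure, P a Borel probability measure on ℝ^d, ε ∈ (0,1), z ∈ ℝ^d, and let f be a Kantorovich potential for (Q, (1−ε)P + ε δ_z). Then the set (∂^c f)^{−1}(z) = {x ∈ ℝ^d : z ∈ ∂^c f(x)} has Q-measure at least ε. -/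
open Filter MeasureTheory Bornology Topology Set
open scoped RealInnerProductSpace ENNReal BigOperators Classical

noncomputable section

namespace MeasureTheory.Measure

theorem map_apply_le_of_measurableSet {α β : Type*} [MeasurableSpace α] [MeasurableSpace β]
    (μ : Measure α) (f : α → β) {s : Set β} (hs : MeasurableSet s) :
    μ.map f s ≤ μ (f ⁻¹' s) := by
  by_cases hf : AEMeasurable f μ
  · exact (map_apply_of_aemeasurable hf hs).le
  · simp [map_of_not_aemeasurable hf]

theorem le_add_smul_dirac_apply_singleton {α : Type*} [MeasurableSpace α]
    [MeasurableSingletonClass α] (μ : Measure α) (c : ℝ≥0∞) (a : α) :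
    c ≤ (μ + c • dirac a) {a} := by
  simp

end MeasureTheory.Measure

theorem IsKantorovichPotential.measure_singleton_le {d : ℕ} {h : Euc d → ℝ}
    {Q ν : Measure (Euc d)} {f : Euc d → EReal} (hf : IsKantorovichPotential h Q ν f)
    (y : Euc d) : ν {y} ≤ Q {x | y ∈ CSuperdiffAt h f x} := by
  obtain ⟨-, T, hT, rfl⟩ := hf
  refine (Measure.map_apply_le_of_measurableSet Q T (measurableSet_singleton y)).trans
    (measure_mono_ae ?_)
  filter_upwards [hT] with x hx (hxy : T x = y)
  show y ∈ CSuperdiffAt h f x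
  rw [hx, hxy]
  rfl

theorem measure_preimage_dirac_ge_general (d : ℕ) (h : Euc d → ℝ)
    (Q P : Measure (Euc d)) (ε : ℝ) (z : Euc d)
    (f : Euc d → EReal)
    (hf : IsKantorovichPotential h Q
      (ENNReal.ofReal (1 - ε) • P + ENNReal.ofReal ε • Measure.dirac z) f) :
    ENNReal.ofReal ε ≤ Q {x | z ∈ CSuperdiffAt h f x} :=
  (Measure.le_add_smul_dirac_apply_singleton _ _ z).trans (hf.measure_singleton_le z)

/-- if `f` is a Kantorovich potential for `(Q, (1-ε)P + ε δ_z)`, then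
`{x : z ∈ ∂^c f(x)}` has `Q`-measure at least `ε`. -/
theorem measure_preimage_dirac_ge (d : ℕ) (hd : 1 ≤ d) (h : Euc d → ℝ)
    (hpos : ∀ x, 0 ≤ h x) (h1 : H1 h) (h2 : H2 h) (h3 : H3 h)
    (Q P : Measure (Euc d)) [IsProbabilityMeasure Q] [IsProbabilityMeasure P]
    (hQ : Q ≪ volume) (ε : ℝ) (hε : ε ∈ Set.Ioo (0 : ℝ) 1) (z : Euc d)
    (f : Euc d → EReal)
    (hf : IsKantorovichPotential h Q
      (ENNReal.ofReal (1 - ε) • P + ENNReal.ofReal ε • Measure.dirac z) f) :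
    ENNReal.ofReal ε ≤ Q {x | z ∈ CSuperdiffAt h f x} :=
  measure_preimage_dirac_ge_general d h Q P ε z f hf

end
end
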